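/- arXiv:2406.14700 — 2 statements merged into one kernel-verified Lean document; each statement's English description precedes it below -/
import Mathlib

section
/- For every ε > 0 there exists δ > 0 such that for all p ∈ (p_0, p_0 + δ): the integer n(p) exists and (1 − ε)·p^{n(p)+1} < s(p) < (1 + ε)·p^{n(p)}. -/
/-!
For `p ∈ [1/2, 1)` the sequence `s p` is nondecreasing from `n = 2` on. As long as it is, the
maximum in the definition of `v p (n + 1)` is attained by keeping one head, or by keeping all heads
when `n` of the `n + 1` coins show heads; this turns the definition into a first-order recurrence
for `s p (n + 1)` in terms of `s p n`, and monotonicity follows by an induction that carries a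
sign-dependent bound on `s p n`.

The increments of `s p` are `O(n p^n)`, so `s p n → s(p)` uniformly on `[1/2, 2/3]`. Hence `s` is
continuous there; as `s(1/2) < 0 < s(2/3)` and `p₀` is the only root, `s > 0` on `(p₀, 2/3]`, while
`s p₀ n < 0` for every `n ≥ 2`. By continuity of `s · m`, for `p` slightly above `p₀` still
`s p m < 0`, so `n(p) > m`. Summing the recurrence from `n(p)` on, where `s p n ≥ 0`, gives
`s(p) ≤ p^{n(p)}` and `s(p) ≥ p^{n(p)+1} (1 - O(s(p)) - 2 ((1 - p)/p)^m)`; here `s(p)` is at most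
the tail of the increments beyond `m`, and `(1 - p)/p < 1` because `p₀ > 1/2`.
-/

/-- `v p n` is the optimal expected number of heads in the coin game with `n` coins,
each landing heads with probability `p`. -/
noncomputable def v (p : ℝ) : ℕ → ℝ
  | 0 => 0
  | n + 1 =>
      ((n : ℝ) + 1) * p ^ (n + 1) + v p n * (1 - p) ^ (n + 1) +
        ∑ j ∈ (Finset.Icc 1 n).attach,
          (((n + 1).choose j.1 : ℕ) : ℝ) * p ^ (j.1 : ℕ) * (1 - p) ^ (n + 1 - j.1) *
            ((Finset.Icc 1 j.1).attach.sup'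
              (Finset.attach_nonempty_iff.mpr
                (Finset.nonempty_Icc.mpr (Finset.mem_Icc.mp j.2).1))
              (fun i => v p (n + 1 - i.1) + (i.1 : ℝ)))
decreasing_by
  · omega
  · have h := (Finset.mem_Icc.mp i.2).1
    omega

/-- `s p n = v p n - n + 1 - p`. -/
noncomputable def s (p : ℝ) (n : ℕ) : ℝ := v p n - n + 1 - p

/-- `IsNp p m` asserts that `m` is the smallest integer `n ≥ 2` with `s p n ≥ 0`. -/
def IsNp (p : ℝ) (m : ℕ) : Prop :=
  2 ≤ m ∧ 0 ≤ s p m ∧ ∀ k : ℕ, 2 ≤ k → 0 ≤ s p k → m ≤ k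


open Filter Topology

namespace CoinGame

theorem v_one (p : ℝ) : v p 1 = p := by
  rw [v, Finset.sum_eq_zero fun j _ => absurd (Finset.mem_Icc.mp j.2) (by omega)]
  simp [v]

theorem s_one (p : ℝ) : s p 1 = 0 := by simp [s, v_one]

theorem continuous_v (n : ℕ) : Continuous fun p => v p n := by
  induction n using Nat.strong_induction_on with
  | _ n ih =>
    cases n with
    | zero => simpa only [v] using continuous_const
    | succ n =>
      have hn := ih n (by omega)
      rw [funext fun p => v.eq_2 p n]
      refine (by fun_prop : Continuous _).add (continuous_finsetSum _ fun j _ => ?_)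
      refine (by fun_prop : Continuous _).mul (Continuous.finset_sup'_apply _ fun i _ => ?_)
      have := (Finset.mem_Icc.mp i.2).1
      exact (ih _ (by omega)).add continuous_const

theorem continuous_s (n : ℕ) : Continuous fun p => s p n :=
  (((continuous_v n).sub continuous_const).add continuous_const).sub continuous_id

theorem sum_Icc_choose_mul_pow (p : ℝ) (n : ℕ) :
    ∑ j ∈ Finset.Icc 1 n, ((n + 1).choose j : ℝ) * p ^ j * (1 - p) ^ (n + 1 - j) =
      1 - p ^ (n + 1) - (1 - p) ^ (n + 1) := by
  have h := add_pow p (1 - p) (n + 1)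
  rw [add_sub_cancel, one_pow, Finset.sum_range_eq_add_Ico _ (by omega),
    Finset.sum_Ico_succ_top (by omega), Finset.Ico_add_one_right_eq_Icc] at h
  simp only [pow_zero, one_mul, Nat.sub_zero, Nat.choose_zero_right, Nat.cast_one, mul_one,
    Nat.sub_self, Nat.choose_self] at h
  rw [Finset.sum_congr rfl fun j _ => mul_rotate _ _ _]
  linarith

variable {p L : ℝ} {n m : ℕ}

theorem v_eq_s_add (p : ℝ) (n : ℕ) : v p n = s p n + n - 1 + p := by unfold s; ring

theorem v_sub_add_le (hmono : ∀ k, 2 ≤ k → k ≤ n → s p k ≤ s p n) {i : ℕ} (hi : 1 ≤ i)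
    (hin : i < n) : v p (n + 1 - i) + i ≤ v p n + 1 := by
  have := hmono (n + 1 - i) (by omega) (by omega)
  rw [v_eq_s_add, v_eq_s_add, Nat.cast_sub (by omega)]
  push_cast
  linarith

-- Monotonicity of `s p` up to `n` makes keeping a single head optimal; the only competitor is
-- keeping all heads when `n` of the `n + 1` coins show heads.
theorem sup'_v_sub_add_eq (hmono : ∀ k, 2 ≤ k → k ≤ n → s p k ≤ s p n) {j : ℕ} (hj : 1 ≤ j)
    (hjn : j ≤ n) (hne : (Finset.Icc 1 j).attach.Nonempty) :
    (Finset.Icc 1 j).attach.sup' hne (fun i => v p (n + 1 - i.1) + (i.1 : ℝ)) =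
      v p n + 1 + if j = n then max (-s p n) 0 else 0 := by
  have hlast : v p (n + 1 - n) + n = v p n + 1 + -s p n := by
    rw [Nat.add_sub_cancel_left, v_one, v_eq_s_add]; ring
  apply le_antisymm
  · refine Finset.sup'_le _ _ fun ⟨i, hi⟩ _ => show v p (n + 1 - i) + (i : ℝ) ≤ _ from ?_
    obtain ⟨hi1, hij⟩ := Finset.mem_Icc.mp hi
    rcases lt_or_eq_of_le (hij.trans hjn) with hin | rfl
    · have := v_sub_add_le hmono hi1 hin
      split_ifs <;> linarith [le_max_right (-s p n) 0]
    · rw [if_pos (le_antisymm hjn hij), hlast]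
      linarith [le_max_left (-s p i) 0]
  · have h1 := Finset.le_sup' (fun i : Finset.Icc 1 j => v p (n + 1 - i.1) + (i.1 : ℝ))
      (Finset.mem_attach _ ⟨1, Finset.mem_Icc.mpr ⟨le_rfl, hj⟩⟩)
    simp only [Nat.add_sub_cancel, Nat.cast_one] at h1
    split_ifs with hjn'
    · subst hjn'
      have h2 := Finset.le_sup' (fun i : Finset.Icc 1 j => v p (j + 1 - i.1) + (i.1 : ℝ))
        (Finset.mem_attach _ ⟨j, Finset.mem_Icc.mpr ⟨hj, le_rfl⟩⟩)
      rw [add_max, add_zero]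
      exact max_le (hlast ▸ h2) h1
    · rwa [add_zero]

theorem s_succ (hn : 1 ≤ n) (hmono : ∀ k, 2 ≤ k → k ≤ n → s p k ≤ s p n) :
    s p (n + 1) = s p n + p ^ (n + 1) * (1 - p - s p n) - (1 - p) ^ (n + 1) +
      (n + 1) * p ^ n * (1 - p) * max (-s p n) 0 := by
  have hv : v p (n + 1) = (n + 1) * p ^ (n + 1) + v p n * (1 - p) ^ (n + 1) +
      ∑ j ∈ Finset.Icc 1 n, ((n + 1).choose j : ℝ) * p ^ j * (1 - p) ^ (n + 1 - j) *
        (v p n + 1 + if j = n then max (-s p n) 0 else 0) := by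
    rw [v, Finset.sum_congr rfl fun j _ => congrArg (_ * ·)
      (sup'_v_sub_add_eq hmono (Finset.mem_Icc.mp j.2).1 (Finset.mem_Icc.mp j.2).2 _)]
    exact congrArg _ (Finset.sum_attach (Finset.Icc 1 n) fun j =>
      ((n + 1).choose j : ℝ) * p ^ j * (1 - p) ^ (n + 1 - j) *
        (v p n + 1 + if j = n then max (-s p n) 0 else 0))
  simp only [mul_add, Finset.sum_add_distrib, ← Finset.sum_mul, sum_Icc_choose_mul_pow, mul_ite,
    mul_zero, Finset.sum_ite_eq', Finset.mem_Icc, le_refl, hn, and_self, if_true,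
    Nat.choose_succ_self_right, Nat.add_sub_cancel_left, pow_one] at hv
  rw [s, hv, v_eq_s_add p n, pow_succ]
  push_cast
  ring

/-- The probability that at least `n` of `n + 1` coins show heads. -/
noncomputable def F (p : ℝ) (n : ℕ) : ℝ := p ^ (n + 1) + (n + 1) * p ^ n * (1 - p)

noncomputable def G (p : ℝ) (n : ℕ) : ℝ := (1 - p) ^ (n + 1) - (1 - p) * p ^ (n + 1)

theorem s_succ_of_nonpos (hn : 1 ≤ n) (hmono : ∀ k, 2 ≤ k → k ≤ n → s p k ≤ s p n)
    (hs : s p n ≤ 0) : s p (n + 1) = s p n * (1 - F p n) - G p n := by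
  rw [s_succ hn hmono, max_eq_left (by linarith), F, G, pow_succ p n]
  ring

theorem s_succ_of_nonneg (hn : 1 ≤ n) (hmono : ∀ k, 2 ≤ k → k ≤ n → s p k ≤ s p n)
    (hs : 0 ≤ s p n) : s p (n + 1) = s p n * (1 - p ^ (n + 1)) - G p n := by
  rw [s_succ hn hmono, max_eq_right (by linarith), G]
  ring

theorem s_two (p : ℝ) : s p 2 = (1 - p) * p ^ 2 - (1 - p) ^ 2 := by
  rw [s_succ le_rfl fun k hk hk' => by omega, s_one]
  norm_num
  ring

theorem F_pos (hp : 0 < p) (hp1 : p ≤ 1) (n : ℕ) : 0 < F p n := by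
  unfold F
  have : 0 ≤ (n + 1) * p ^ n * (1 - p) := by
    apply mul_nonneg (by positivity) (by linarith)
  linarith [pow_pos hp (n + 1)]

theorem F_le_one (hp : 0 ≤ p) (n : ℕ) : F p n ≤ 1 := by
  induction n with
  | zero => simp [F]
  | succ n ih =>
    have hstep : F p (n + 1) = F p n - (n + 1) * p ^ n * (1 - p) ^ 2 := by
      simp only [F, pow_succ]; push_cast; ring
    have : 0 ≤ (n + 1) * p ^ n * (1 - p) ^ 2 := by positivity
    linarith

theorem G_succ_mul_F_le (hp : 1 / 2 ≤ p) (hp1 : p < 1) (hG : 0 < G p (n + 1)) :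
    G p (n + 1) * F p n ≤ G p n * F p (n + 1) := by
  have hq : 0 < 1 - p := by linarith
  have hP : 0 ≤ p ^ n := pow_nonneg (by linarith) n
  have hQP : (1 - p) * p ^ n ≤ (1 - p) ^ n := by
    have h : p ^ 2 * p ^ n < (1 - p) * (1 - p) ^ n := by
      simp only [G, pow_succ] at hG
      nlinarith
    nlinarith [mul_le_mul_of_nonneg_right (by nlinarith : (1 - p) ^ 2 ≤ p ^ 2) hP]
  have hinner : 0 ≤ (1 - p) ^ n * (p ^ 2 + (n + 1) * (1 - p) * (2 * p - 1)) -
      p ^ 2 * ((1 - p) * p ^ n) := by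
    have : 0 ≤ (n + 1) * (1 - p) * (2 * p - 1) := mul_nonneg (by positivity) (by linarith)
    nlinarith [pow_nonneg hq.le n]
  have key : G p n * F p (n + 1) - G p (n + 1) * F p n = (1 - p) * p ^ n *
      ((1 - p) ^ n * (p ^ 2 + (n + 1) * (1 - p) * (2 * p - 1)) - p ^ 2 * ((1 - p) * p ^ n)) := by
    simp only [G, F, pow_succ]; push_cast; ring
  nlinarith [mul_nonneg (mul_nonneg hq.le hP) hinner]

-- Each clause bounds `s p n` so that, in its sign case, the recurrence gives `s p n ≤ s p (n + 1)`.
def GrowthInvariant (p : ℝ) (n : ℕ) : Prop :=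
  (s p n < 0 → G p n ≤ -s p n * F p n) ∧
    (0 ≤ s p n → p ^ n * s p n ≤ (1 - p) * p ^ n - (1 - p) ^ n)

theorem growthInvariant_two (hp : 1 / 2 ≤ p) (hp1 : p < 1) : GrowthInvariant p 2 := by
  refine ⟨fun _ => ?_, fun hs => ?_⟩
  · have key : -s p 2 * F p 2 - G p 2 = (1 - p) * ((2 * p - 1) * (1 - p ^ 2) ^ 2) := by
      rw [s_two]; simp only [F, G]; ring
    have : 0 ≤ (1 - p) * ((2 * p - 1) * (1 - p ^ 2) ^ 2) :=
      mul_nonneg (by linarith) (mul_nonneg (by linarith) (sq_nonneg _))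
    linarith
  · have : p ^ 2 ≤ 1 := by nlinarith
    rw [← s_two]
    nlinarith

theorem le_s_succ_and_invariant_of_neg (hp : 1 / 2 ≤ p) (hp1 : p < 1) (hn : 1 ≤ n)
    (hmono : ∀ k, 2 ≤ k → k ≤ n → s p k ≤ s p n) (hs : s p n < 0)
    (hinv : G p n ≤ -s p n * F p n) : s p n ≤ s p (n + 1) ∧ GrowthInvariant p (n + 1) := by
  have hrec := s_succ_of_nonpos hn hmono hs.le
  have hF := F_pos (by linarith) hp1.le n
  have hF' := F_pos (by linarith) hp1.le (n + 1)
  have hF1 := F_le_one (p := p) (by linarith) n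
  have hle : s p (n + 1) ≤ -G p n := by
    nlinarith [mul_nonpos_of_nonpos_of_nonneg hs.le (sub_nonneg.2 hF1)]
  refine ⟨by linarith, fun hs' => ?_, fun hs' => ?_⟩
  · rcases le_or_gt (G p (n + 1)) 0 with hG | hG
    · nlinarith
    · have h1 : G p n ≤ -s p (n + 1) * F p n := by
        rw [hrec]; nlinarith [mul_le_mul_of_nonneg_right hinv (sub_nonneg.2 hF1)]
      have h2 : G p (n + 1) * F p n ≤ -s p (n + 1) * F p (n + 1) * F p n := by
        nlinarith [G_succ_mul_F_le hp hp1 hG, mul_le_mul_of_nonneg_right h1 hF'.le]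
      exact le_of_mul_le_mul_right h2 hF
  · have : p ^ (n + 1) ≤ 1 := pow_le_one₀ (by linarith) hp1.le
    have : p ^ (n + 1) * s p (n + 1) ≤ s p (n + 1) := by nlinarith
    simp only [G] at hle
    linarith

theorem pow_succ_mul_s_le (hp : 0 ≤ p)
    (hinv : p ^ n * s p n ≤ (1 - p) * p ^ n - (1 - p) ^ n) :
    p ^ (n + 1) * s p n ≤ -G p n - (2 * p - 1) * (1 - p) ^ n := by
  have := mul_le_mul_of_nonneg_left hinv hp
  simp only [G, pow_succ] at this ⊢
  linarith

theorem le_s_succ_sub_of_nonneg (hp : 0 ≤ p) (hn : 1 ≤ n)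
    (hmono : ∀ k, 2 ≤ k → k ≤ n → s p k ≤ s p n) (hs : 0 ≤ s p n)
    (hinv : p ^ n * s p n ≤ (1 - p) * p ^ n - (1 - p) ^ n) :
    (2 * p - 1) * (1 - p) ^ n ≤ s p (n + 1) - s p n := by
  rw [s_succ_of_nonneg hn hmono hs]
  linarith [pow_succ_mul_s_le hp hinv]

theorem le_s_succ_and_invariant_of_nonneg (hp : 1 / 2 ≤ p) (hp1 : p ≤ 1) (hn : 1 ≤ n)
    (hmono : ∀ k, 2 ≤ k → k ≤ n → s p k ≤ s p n) (hs : 0 ≤ s p n)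
    (hinv : p ^ n * s p n ≤ (1 - p) * p ^ n - (1 - p) ^ n) :
    s p n ≤ s p (n + 1) ∧ GrowthInvariant p (n + 1) := by
  have hinc := le_s_succ_sub_of_nonneg (by linarith) hn hmono hs hinv
  have hpow := pow_succ_mul_s_le (by linarith) hinv
  have : 0 ≤ (2 * p - 1) * (1 - p) ^ n := mul_nonneg (by linarith) (pow_nonneg (by linarith) n)
  have hp' : p ^ (n + 1) ≤ 1 := pow_le_one₀ (by linarith) hp1
  refine ⟨by linarith, fun hs' => by linarith, fun _ => ?_⟩
  have hexp : p ^ (n + 1) * s p (n + 1) =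
      p ^ (n + 1) * s p n * (1 - p ^ (n + 1)) - p ^ (n + 1) * G p n := by
    rw [s_succ_of_nonneg hn hmono hs]; ring
  have : -G p n = (1 - p) * p ^ (n + 1) - (1 - p) ^ (n + 1) := by simp only [G]; ring
  nlinarith

theorem monotone_and_invariant (hp : 1 / 2 ≤ p) (hp1 : p < 1) (hn : 2 ≤ n) :
    (∀ k, 2 ≤ k → k ≤ n → s p k ≤ s p n) ∧ GrowthInvariant p n := by
  induction n, hn using Nat.le_induction with
  | base => exact ⟨fun k hk hk' => by rw [le_antisymm hk' hk], growthInvariant_two hp hp1⟩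
  | succ n hn ih =>
    obtain ⟨hmono, hneg, hpos⟩ := ih
    have hstep : s p n ≤ s p (n + 1) ∧ GrowthInvariant p (n + 1) := by
      rcases lt_or_ge (s p n) 0 with hs | hs
      · exact le_s_succ_and_invariant_of_neg hp hp1 (by omega) hmono hs (hneg hs)
      · exact le_s_succ_and_invariant_of_nonneg hp hp1.le (by omega) hmono hs (hpos hs)
    refine ⟨fun k hk hkn => ?_, hstep.2⟩
    rcases Nat.lt_or_ge k (n + 1) with h | h
    · exact (hmono k hk (by omega)).trans hstep.1
    · rw [le_antisymm hkn h]

theorem monotoneOn_s (hp : 1 / 2 ≤ p) (hp1 : p < 1) : MonotoneOn (s p) (Set.Ici 2) :=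
  fun k hk _ hn hkn => (monotone_and_invariant hp hp1 hn).1 k hk hkn

theorem s_le_s_of_le (hp : 1 / 2 ≤ p) (hp1 : p < 1) : ∀ k, 2 ≤ k → k ≤ n → s p k ≤ s p n :=
  fun _ hk hkn => monotoneOn_s hp hp1 hk (hk.trans hkn) hkn

theorem s_succ_le (hp : 1 / 2 ≤ p) (hp1 : p < 1) (hn : 2 ≤ n) :
    s p (n + 1) ≤ s p n + max (-s p 2) 0 * F p n - G p n := by
  have hF := F_pos (by linarith) hp1.le n
  rcases lt_or_ge (s p n) 0 with hs | hs
  · rw [s_succ_of_nonpos (by omega) (s_le_s_of_le hp hp1) hs.le]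
    nlinarith [le_max_left (-s p 2) 0, s_le_s_of_le hp hp1 2 le_rfl hn]
  · rw [s_succ_of_nonneg (by omega) (s_le_s_of_le hp hp1) hs]
    nlinarith [le_max_right (-s p 2) 0, pow_nonneg (by linarith : 0 ≤ p) (n + 1)]

theorem s_succ_le_add_pow (hp : 1 / 2 ≤ p) (hp1 : p < 1) (hn : 2 ≤ n) :
    s p (n + 1) ≤ s p n + (n + 3) * p ^ n := by
  have hpn : 0 ≤ p ^ n := pow_nonneg (by linarith) n
  have hmax : max (-s p 2) 0 ≤ 1 := max_le (by rw [s_two]; nlinarith) zero_le_one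
  have hF : F p n ≤ (n + 2) * p ^ n := by
    have : 0 ≤ (n + 1) * p ^ n := by positivity
    simp only [F, pow_succ]
    nlinarith
  have hG : -G p n ≤ p ^ n := by
    have : (1 - p) * p ≤ 1 := by nlinarith
    simp only [G, pow_succ]
    nlinarith [mul_nonneg (pow_nonneg (by linarith : 0 ≤ 1 - p) n) (by linarith : 0 ≤ 1 - p)]
  nlinarith [s_succ_le hp hp1 hn, F_pos (by linarith) hp1.le n]

theorem s_succ_le_of_nonpos (hp : 1 / 2 ≤ p) (hp1 : p < 1) (hn : 1 ≤ n) (hs : s p n ≤ 0) :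
    s p (n + 1) ≤ (1 - p) * p ^ (n + 1) := by
  rw [s_succ_of_nonpos hn (s_le_s_of_le hp hp1) hs, G]
  nlinarith [pow_nonneg (by linarith : 0 ≤ 1 - p) (n + 1),
    mul_nonpos_of_nonpos_of_nonneg hs (sub_nonneg.2 (F_le_one (p := p) (by linarith) n))]

theorem s_lt_s_succ_of_nonneg (hp : 1 / 2 < p) (hp1 : p < 1) (hn : 2 ≤ n) (hs : 0 ≤ s p n) :
    s p n < s p (n + 1) := by
  have hinv := ((monotone_and_invariant hp.le hp1 hn).2).2 hs
  have := le_s_succ_sub_of_nonneg (by linarith) (by omega) (s_le_s_of_le hp.le hp1) hs hinv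
  nlinarith [pow_pos (by linarith : 0 < 1 - p) n]

theorem le_add_tsum_of_tendsto {a c : ℕ → ℝ} (ha : Tendsto a atTop (𝓝 L))
    (hc : Summable c) (m : ℕ) (h : ∀ k, a (k + 1 + m) ≤ a (k + m) + c k) :
    L ≤ a m + ∑' k, c k := by
  have hpartial : ∀ K, a (K + m) ≤ a m + ∑ k ∈ Finset.range K, c k := by
    intro K
    induction K with
    | zero => simp
    | succ K ih => rw [Finset.sum_range_succ]; linarith [h K]
  exact le_of_tendsto_of_tendsto' ((tendsto_add_atTop_iff_nat m).mpr ha)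
    (tendsto_const_nhds.add hc.tendsto_sum_tsum_nat) hpartial

theorem add_tsum_le_of_tendsto {a c : ℕ → ℝ} (ha : Tendsto a atTop (𝓝 L))
    (hc : Summable c) (m : ℕ) (h : ∀ k, a (k + m) + c k ≤ a (k + 1 + m)) :
    a m + ∑' k, c k ≤ L := by
  have := le_add_tsum_of_tendsto ha.neg hc.neg m fun k => by linarith [h k]
  rw [tsum_neg] at this
  linarith

theorem s_le_of_tendsto (hp : 1 / 2 ≤ p) (hp1 : p < 1)
    (hL : Tendsto (fun n => s p n) atTop (𝓝 L)) (hn : 2 ≤ n) : s p n ≤ L :=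
  ge_of_tendsto hL (eventually_atTop.2 ⟨n, fun _ hk => s_le_s_of_le hp hp1 n hn hk⟩)

theorem le_s_add_pow_of_tendsto (hp : 1 / 2 ≤ p) (hp1 : p < 1)
    (hL : Tendsto (fun n => s p n) atTop (𝓝 L)) (hn : 2 ≤ n) (hs : 0 ≤ s p n) :
    L ≤ s p n + p ^ (n + 1) := by
  have hq : 0 < 1 - p := by linarith
  have := le_add_tsum_of_tendsto hL ((summable_geometric_of_lt_one (by linarith) hp1).mul_left
    ((1 - p) * p ^ (n + 1))) n fun k => by
      have hk : 0 ≤ s p (k + n) := hs.trans (s_le_s_of_le hp hp1 n hn (by omega))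
      rw [show k + 1 + n = k + n + 1 by omega, s_succ_of_nonneg (by omega) (s_le_s_of_le hp hp1) hk]
      have : (1 - p) * p ^ (n + 1) * p ^ k = (1 - p) * p ^ (k + n + 1) := by ring
      rw [G]
      nlinarith [pow_nonneg (by linarith : 0 ≤ p) (k + n + 1),
        pow_nonneg hq.le (k + n + 1)]
  rwa [tsum_mul_left, tsum_geometric_of_lt_one (by linarith) hp1, mul_assoc,
    mul_comm (p ^ (n + 1)), mul_inv_cancel_left₀ hq.ne'] at this

theorem s_add_geom_le_of_tendsto (hp : 1 / 2 ≤ p) (hp1 : p < 1)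
    (hL : Tendsto (fun n => s p n) atTop (𝓝 L)) (hn : 2 ≤ n) (hs : 0 ≤ s p n) :
    s p n + (1 - p - L) * p ^ (n + 1) / (1 - p) - (1 - p) ^ (n + 1) / p ≤ L := by
  have hq : 0 < 1 - p := by linarith
  have hp0 : 0 < p := by linarith
  have hgp := summable_geometric_of_lt_one hp0.le hp1
  have hgq := summable_geometric_of_lt_one hq.le (by linarith : 1 - p < 1)
  have := add_tsum_le_of_tendsto hL ((hgp.mul_left ((1 - p - L) * p ^ (n + 1))).sub
    (hgq.mul_left ((1 - p) ^ (n + 1)))) n fun k => by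
      have hk : 0 ≤ s p (k + n) := hs.trans (s_le_s_of_le hp hp1 n hn (by omega))
      have hkL : s p (k + n) ≤ L := s_le_of_tendsto hp hp1 hL (by omega)
      rw [show k + 1 + n = k + n + 1 by omega,
        s_succ_of_nonneg (by omega) (s_le_s_of_le hp hp1) hk, G]
      have e1 : (1 - p - L) * p ^ (n + 1) * p ^ k = (1 - p - L) * p ^ (k + n + 1) := by ring
      have e2 : (1 - p) ^ (n + 1) * (1 - p) ^ k = (1 - p) ^ (k + n + 1) := by ring
      nlinarith [mul_le_mul_of_nonneg_left hkL (pow_nonneg hp0.le (k + n + 1))]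
  rw [(hgp.mul_left _).tsum_sub (hgq.mul_left _), tsum_mul_left, tsum_mul_left,
    tsum_geometric_of_lt_one hp0.le hp1, tsum_geometric_of_lt_one hq.le (by linarith),
    sub_sub_cancel] at this
  convert this using 1
  ring

-- `(k + 3) * (2 / 3) ^ k` bounds the increment `s p (k + 1) - s p k` when `p ≤ 2 / 3`.
noncomputable def tail (m : ℕ) : ℝ := ∑' k : ℕ, ((k + m : ℕ) + 3 : ℝ) * (2 / 3) ^ (k + m)

theorem summable_add_three_mul_pow : Summable fun j : ℕ => ((j : ℝ) + 3) * (2 / 3) ^ j := by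
  have h := (hasSum_coe_mul_geometric_of_norm_lt_one (𝕜 := ℝ) (r := 2 / 3) (by norm_num)).summable
  simpa only [add_mul] using h.add ((summable_geometric_of_lt_one (by norm_num)
    (by norm_num : (2 / 3 : ℝ) < 1)).mul_left 3)

theorem tendsto_tail : Tendsto tail atTop (𝓝 0) :=
  tendsto_sum_nat_add fun j : ℕ => ((j : ℝ) + 3) * (2 / 3) ^ j

theorem exists_three_mul_tail_add_lt {q ε : ℝ} (hq : 0 ≤ q) (hq1 : q < 1) (hε : 0 < ε) :
    ∃ m, 2 ≤ m ∧ 3 * tail m + 2 * q ^ m < ε := by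
  have h := (tendsto_tail.const_mul 3).add
    ((tendsto_pow_atTop_nhds_zero_of_lt_one hq hq1).const_mul 2)
  rw [mul_zero, mul_zero, add_zero] at h
  exact ((eventually_ge_atTop 2).and (h.eventually (gt_mem_nhds hε))).exists

theorem le_s_add_tail_of_tendsto (hp : 1 / 2 ≤ p) (hp' : p ≤ 2 / 3)
    (hL : Tendsto (fun n => s p n) atTop (𝓝 L)) (hm : 2 ≤ m) : L ≤ s p m + tail m :=
  le_add_tsum_of_tendsto hL ((summable_nat_add_iff m).mpr summable_add_three_mul_pow) m fun k => by
    rw [show k + 1 + m = k + m + 1 by omega]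
    have := s_succ_le_add_pow hp (by linarith) (show 2 ≤ k + m by omega)
    have : p ^ (k + m) ≤ (2 / 3) ^ (k + m) := pow_le_pow_left₀ (by linarith) hp' _
    nlinarith [(k + m : ℕ).cast_nonneg (α := ℝ)]

-- The increments of `s (1 / 2)` beyond `n = 2` sum to at most `1 / 32 < -s (1 / 2) 2 = 1 / 8`.
theorem lt_zero_of_tendsto_s_half (hL : Tendsto (fun n => s (1 / 2) n) atTop (𝓝 L)) :
    L < 0 := by
  have hs2 : s (1 / 2) 2 = -1 / 8 := by rw [s_two]; norm_num
  have := le_add_tsum_of_tendsto hL ((hasSum_coe_mul_geometric_of_norm_lt_one (𝕜 := ℝ)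
    (r := 1 / 2) (by norm_num)).summable.mul_left (1 / 64)) 2 fun k => by
      have key : max (-s (1 / 2) 2) 0 * F (1 / 2) (k + 2) - G (1 / 2) (k + 2) =
          1 / 64 * (k * (1 / 2) ^ k) := by
        rw [hs2, F, G]; norm_num; ring
      rw [show k + 1 + 2 = k + 2 + 1 by omega]
      linarith [s_succ_le (p := 1 / 2) (by norm_num) (by norm_num) (show 2 ≤ k + 2 by omega)]
  rw [tsum_mul_left, tsum_coe_mul_geometric_of_norm_lt_one (by norm_num), hs2] at this
  norm_num at this
  linarith

theorem tendstoUniformlyOn_s {S : ℝ → ℝ}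
    (hS : ∀ p ∈ Set.Icc (1 / 2 : ℝ) (2 / 3), Tendsto (fun n => s p n) atTop (𝓝 (S p))) :
    TendstoUniformlyOn (fun n p => s p n) S atTop (Set.Icc (1 / 2) (2 / 3)) := by
  rw [Metric.tendstoUniformlyOn_iff]
  intro ε hε
  filter_upwards [tendsto_tail.eventually (gt_mem_nhds hε), eventually_ge_atTop 2]
    with m hm hm2 p hp
  have h1 := s_le_of_tendsto hp.1 (by linarith [hp.2]) (hS p hp) hm2
  have h2 := le_s_add_tail_of_tendsto hp.1 hp.2 (hS p hp) hm2
  rw [Real.dist_eq, abs_sub_lt_iff]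
  constructor <;> linarith

theorem pos_of_unique_root {S : ℝ → ℝ} {p₀ : ℝ}
    (hS : ∀ p ∈ Set.Icc (1 / 2 : ℝ) (2 / 3), Tendsto (fun n => s p n) atTop (𝓝 (S p)))
    (hroot : ∀ q ∈ Set.Icc (1 / 2 : ℝ) (2 / 3), S q = 0 → q = p₀) (hp₀ : 1 / 2 ≤ p₀)
    (hp : p₀ < p) (hp' : p ≤ 2 / 3) : 0 < S p := by
  have hcont : ContinuousOn S (Set.Icc (1 / 2) (2 / 3)) :=
    (tendstoUniformlyOn_s hS).continuousOn
      (Frequently.of_forall fun n => (continuous_s n).continuousOn)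
  have hS23 : 0 < S (2 / 3) := by
    have := s_le_of_tendsto (by norm_num) (by norm_num) (hS (2 / 3) (by norm_num)) le_rfl
    rw [s_two] at this
    linarith
  by_contra! hSp
  obtain ⟨y, hy, hSy⟩ := intermediate_value_Icc hp' (hcont.mono (Set.Icc_subset_Icc_left
    (by linarith))) ⟨hSp, hS23.le⟩
  have := hroot y ⟨by linarith [hy.1], hy.2⟩ hSy
  linarith [hy.1]

theorem half_lt_of_tendsto_zero (hp : 1 / 2 ≤ p) (hL : Tendsto (fun n => s p n) atTop (𝓝 0)) :
    1 / 2 < p := by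
  refine lt_of_le_of_ne hp fun h => ?_
  subst h
  exact lt_irrefl _ (lt_zero_of_tendsto_s_half hL)

theorem lt_two_thirds_of_tendsto_zero (hp : 1 / 2 ≤ p) (hp1 : p < 1)
    (hL : Tendsto (fun n => s p n) atTop (𝓝 0)) : p < 2 / 3 := by
  have := s_le_of_tendsto hp hp1 hL le_rfl
  rw [s_two] at this
  nlinarith

theorem s_neg_of_tendsto_zero (hp : 1 / 2 < p) (hp1 : p < 1)
    (hL : Tendsto (fun n => s p n) atTop (𝓝 0)) (hn : 2 ≤ n) : s p n < 0 := by
  by_contra! h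
  linarith [s_lt_s_succ_of_nonneg hp hp1 hn h, s_le_of_tendsto hp.le hp1 hL (by omega : 2 ≤ n + 1)]

theorem exists_isNp (hL : Tendsto (fun n => s p n) atTop (𝓝 L)) (hLpos : 0 < L) :
    ∃ n, IsNp p n := by
  classical
  have hex : ∃ k, 2 ≤ k ∧ 0 ≤ s p k := by
    obtain ⟨k, hk⟩ := eventually_atTop.mp (hL.eventually (lt_mem_nhds hLpos))
    exact ⟨max k 2, le_max_right _ _, (hk _ (le_max_left _ _)).le⟩
  exact ⟨Nat.find hex, (Nat.find_spec hex).1, (Nat.find_spec hex).2,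
    fun k hk hsk => Nat.find_min' hex ⟨hk, hsk⟩⟩

theorem _root_.IsNp.lt_of_neg (hp : 1 / 2 ≤ p) (hp1 : p < 1) (hn : IsNp p n)
    (hsm : s p m < 0) : m < n := by
  by_contra! h
  linarith [s_le_s_of_le hp hp1 n hn.1 h, hn.2.1]

theorem _root_.IsNp.neg_of_lt {k : ℕ} (hn : IsNp p n) (hk : 2 ≤ k) (hkn : k < n) : s p k < 0 := by
  by_contra! h
  exact absurd (hn.2.2 k hk h) (by omega)

theorem _root_.IsNp.le_pow_of_tendsto (hp : 1 / 2 ≤ p) (hp1 : p < 1)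
    (hL : Tendsto (fun n => s p n) atTop (𝓝 L)) (hn : IsNp p n) (hm : 2 ≤ m)
    (hsm : s p m < 0) : L ≤ p ^ n := by
  have hmn := hn.lt_of_neg hp hp1 hsm
  obtain ⟨k, rfl⟩ : ∃ k, n = k + 1 := ⟨n - 1, by omega⟩
  have h1 := s_succ_le_of_nonpos hp hp1 (by omega) (hn.neg_of_lt (k := k) (by omega) (by omega)).le
  have h2 := le_s_add_pow_of_tendsto hp hp1 hL hn.1 hn.2.1
  rw [pow_succ p (k + 1)] at h2
  linarith

theorem _root_.IsNp.mul_pow_le_of_tendsto {p₀ : ℝ} (hp₀ : 0 < p₀) (hp₀p : p₀ ≤ p) (hp : 1 / 2 ≤ p)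
    (hp' : p ≤ 2 / 3) (hL : Tendsto (fun n => s p n) atTop (𝓝 L)) (hn : IsNp p n)
    (hm : 2 ≤ m) (hsm : s p m < 0) :
    (1 - 3 * tail m - 2 * ((1 - p₀) / p₀) ^ m) * p ^ (n + 1) ≤ L := by
  have hp1 : p < 1 := by linarith
  have hpos : 0 < p := by linarith
  have hq : 0 < 1 - p := by linarith
  have hmn := hn.lt_of_neg hp hp1 hsm
  have hχ := s_add_geom_le_of_tendsto hp hp1 hL hn.1 hn.2.1
  have hLt : L ≤ tail m := by linarith [le_s_add_tail_of_tendsto hp hp' hL hm]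
  have hL0 : 0 ≤ L := hn.2.1.trans (s_le_of_tendsto hp hp1 hL hn.1)
  have hP : 0 < p ^ (n + 1) := pow_pos hpos _
  have hqq : (1 - p) / p ≤ (1 - p₀) / p₀ := by
    rw [div_le_div_iff₀ hpos hp₀]; nlinarith
  have hq0 : 0 ≤ (1 - p) / p := div_nonneg hq.le hpos.le
  have hqm : ((1 - p) / p) ^ (n + 1) ≤ ((1 - p₀) / p₀) ^ m :=
    (pow_le_pow_of_le_one hq0 (by rw [div_le_one hpos]; linarith)
      (by omega : m ≤ n + 1)).trans (pow_le_pow_left₀ hq0 hqq m)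
  have h1 : (1 - p - L) * p ^ (n + 1) / (1 - p) ≥ p ^ (n + 1) - 3 * tail m * p ^ (n + 1) := by
    have : 0 ≤ tail m * p ^ (n + 1) * (3 * (1 - p) - 1) :=
      mul_nonneg (mul_nonneg (hL0.trans hLt) hP.le) (by linarith)
    rw [ge_iff_le, le_div_iff₀ hq]
    nlinarith [mul_le_mul_of_nonneg_right hLt hP.le]
  have h2 : (1 - p) ^ (n + 1) / p ≤ 2 * ((1 - p₀) / p₀) ^ m * p ^ (n + 1) := by
    have hsplit : (1 - p) ^ (n + 1) = ((1 - p) / p) ^ (n + 1) * p ^ (n + 1) := by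
      rw [← mul_pow, div_mul_cancel₀ _ hpos.ne']
    have : 0 ≤ ((1 - p₀) / p₀) ^ m * p ^ (n + 1) * (2 * p - 1) :=
      mul_nonneg (mul_nonneg (pow_nonneg (hq0.trans hqq) m) hP.le) (by linarith)
    rw [div_le_iff₀ hpos, hsplit]
    nlinarith [mul_le_mul_of_nonneg_right hqm hP.le]
  nlinarith [hn.2.1]

end CoinGame

open CoinGame

theorem coin_game_s_bounds_near_p0 (S : ℝ → ℝ)
    (hS : ∀ p : ℝ, 1 / 2 ≤ p → p ≤ 1 →
      Filter.Tendsto (fun n : ℕ => s p n) Filter.atTop (nhds (S p)))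
    (p0 : ℝ) (hp0l : 1 / 2 ≤ p0) (hp0u : p0 < 1) (hp0z : S p0 = 0)
    (hp0uniq : ∀ q : ℝ, 1 / 2 ≤ q → q < 1 → S q = 0 → q = p0) :
    ∀ ε : ℝ, 0 < ε → ∃ δ : ℝ, 0 < δ ∧ ∀ p : ℝ, p0 < p → p < p0 + δ →
      ∃ m : ℕ, IsNp p m ∧ (1 - ε) * p ^ (m + 1) < S p ∧ S p < (1 + ε) * p ^ m := by
  intro ε hε
  have hS' : ∀ p ∈ Set.Icc (1 / 2 : ℝ) (2 / 3), Tendsto (fun n => s p n) atTop (𝓝 (S p)) :=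
    fun p hp => hS p hp.1 (by linarith [hp.2])
  have hL0 : Tendsto (fun n => s p0 n) atTop (𝓝 0) := hp0z ▸ hS p0 hp0l hp0u.le
  have hhalf := half_lt_of_tendsto_zero hp0l hL0
  have hthird := lt_two_thirds_of_tendsto_zero hp0l hp0u hL0
  obtain ⟨m, hm2, hmε⟩ := exists_three_mul_tail_add_lt (div_nonneg (by linarith) (by linarith))
    ((div_lt_one (by linarith : 0 < p0)).mpr (by linarith : 1 - p0 < p0)) hε
  obtain ⟨δ, hδ, hball⟩ := Metric.eventually_nhds_iff.mp ((continuous_s m).continuousAt.eventually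
    (gt_mem_nhds (s_neg_of_tendsto_zero hhalf hp0u hL0 hm2)))
  refine ⟨min δ (2 / 3 - p0), lt_min hδ (by linarith), fun p hp hpδ => ?_⟩
  have hp23 : p ≤ 2 / 3 := by linarith [min_le_right δ (2 / 3 - p0)]
  have hsm : s p m < 0 := hball (by
    rw [Real.dist_eq, abs_lt]; constructor <;> linarith [min_le_left δ (2 / 3 - p0)])
  have hL := hS p (by linarith) (by linarith)
  obtain ⟨n, hn⟩ := exists_isNp hL (pos_of_unique_root hS'
    (fun q hq => hp0uniq q hq.1 (by linarith [hq.2])) hp0l hp hp23)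
  have hlow := hn.mul_pow_le_of_tendsto (by linarith) hp.le (by linarith) hp23 hL hm2 hsm
  have hup := hn.le_pow_of_tendsto (by linarith) (by linarith) hL hm2 hsm
  refine ⟨n, hn, ?_, ?_⟩
  · nlinarith [pow_pos (by linarith : 0 < p) (n + 1)]
  · nlinarith [pow_pos (by linarith : 0 < p) n]
end

section
/- For every real p with 1/2 ≤ p ≤ 1 and every integer n ≥ 2, the recursion simplifies to v_n(p) = v_{n-1}(p) + 1 + p^n·(n − 1 − v_{n-1}(p)) + n·p^{n-1}·(1−p)·max(0, n − 2 + p − v_{n-1}(p)) − (1−p)^n. -/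
lemma v_zero (p : ℝ) : v p 0 = 0 := by rw [v]

lemma v_succ (p : ℝ) (n : ℕ) : v p (n+1) =
      ((n : ℝ) + 1) * p ^ (n + 1) + v p n * (1 - p) ^ (n + 1) +
        ∑ j ∈ (Finset.Icc 1 n).attach,
          (((n + 1).choose j.1 : ℕ) : ℝ) * p ^ (j.1 : ℕ) * (1 - p) ^ (n + 1 - j.1) *
            ((Finset.Icc 1 j.1).attach.sup'
              (Finset.attach_nonempty_iff.mpr
                (Finset.nonempty_Icc.mpr (Finset.mem_Icc.mp j.2).1))
              (fun i => v p (n + 1 - i.1) + (i.1 : ℝ))) := by rw [v]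

lemma v_one (p : ℝ) : v p 1 = p := by
  rw [v_succ, v_zero]
  rw [Finset.sum_eq_zero fun x _ => absurd (Finset.mem_Icc.mp x.2) (by omega)]
  norm_num

lemma pow_binom (p q : ℝ) (hp : 0 ≤ p) (hq : 0 ≤ q) (hs : p + q = 1) (r : ℕ) :
    p ^ (r+1) + ((r:ℝ)+1) * p ^ r * q ≤ 1 := by
  induction r with
  | zero => simp; nlinarith
  | succ r ih =>
      have h1 : p ^ (r+1) ≤ 1 := pow_le_one₀ hp (by linarith)
      have h2 : (0:ℝ) ≤ p ^ r := pow_nonneg hp r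
      have e : p ^ (r+1+1) + (((r+1:ℕ):ℝ)+1) * p ^ (r+1) * q
          = p * (p ^ (r+1) + ((r:ℝ)+1) * p ^ r * q) + p ^ (r+1) * q := by
        push_cast; ring
      rw [e]
      nlinarith

lemma sum_binom (p : ℝ) (m : ℕ) (hm : 1 ≤ m) :
    ∑ j ∈ Finset.Icc 1 m, (((m+1).choose j : ℕ) : ℝ) * p ^ j * (1-p) ^ (m+1-j)
      = 1 - p ^ (m+1) - (1-p) ^ (m+1) := by
  have h := add_pow p (1-p) (m+1)
  rw [show p + (1-p) = 1 by ring, one_pow] at h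
  have hset : Finset.range (m+2) = insert 0 (insert (m+1) (Finset.Icc 1 m)) := by
    ext x; simp [Finset.mem_range, Finset.mem_Icc]; omega
  rw [hset, Finset.sum_insert (by simp), Finset.sum_insert (by simp)] at h
  simp only [pow_zero, Nat.choose_zero_right, Nat.choose_self, Nat.sub_self,
    Nat.cast_one, one_mul, mul_one, Nat.add_sub_cancel_left, Nat.sub_zero] at h
  have hc : ∀ j ∈ Finset.Icc 1 m,
      (((m+1).choose j : ℕ) : ℝ) * p ^ j * (1-p) ^ (m+1-j)
        = p ^ j * (1-p) ^ (m+1-j) * ((m+1).choose j : ℕ) := fun j _ => by ring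
  rw [Finset.sum_congr rfl hc]
  linarith

set_option maxHeartbeats 1000000 in
lemma Istep (p q w' w : ℝ) (r : ℕ) (hp1 : 1/2 ≤ p) (hp2 : p ≤ 1) (hq : q = 1 - p)
    (hIr : q^(r+1) ≤ p^(r+1)*w' + ((r:ℝ)+1)*p^r*q*(max 0 (w' - q)))
    (hw : w = w'*(1-p^(r+1)) - ((r:ℝ)+1)*p^r*q*(max 0 (w' - q)) + q^(r+1)) :
    q^(r+1+1) ≤ p^(r+1+1)*w + ((r:ℝ)+1+1)*p^(r+1)*q*(max 0 (w - q)) := by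
  have hp0 : (0:ℝ) < p := by linarith
  have hq0 : (0:ℝ) ≤ q := by rw [hq]; linarith
  have hqp : q ≤ p := by rw [hq]; linarith
  have hP1 : p^(r+1) ≤ 1 := pow_le_one₀ hp0.le hp2
  have hpr : (0:ℝ) ≤ p^r := pow_nonneg hp0.le r
  have hPnn : (0:ℝ) ≤ p^(r+1) := pow_nonneg hp0.le _
  have hqr1 : (0:ℝ) ≤ q^(r+1) := pow_nonneg hq0 _
  have hb := pow_binom p q hp0.le hq0 (by rw [hq]; ring) r
  have hD : (0:ℝ) ≤ 1 - p^(r+1) - ((r:ℝ)+1)*p^r*q := by linarith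
  have hrnn : (0:ℝ) ≤ (r:ℝ) := Nat.cast_nonneg r
  have hT : (0:ℝ) ≤ ((r:ℝ) + 1 + 1) * p^(r+1) * q * max 0 (w - q) :=
    mul_nonneg (by positivity) (le_max_left _ _)
  have hqs : q^(r+1+1) = q^(r+1) * q := pow_succ q (r+1)
  rcases le_or_gt w' q with hc | hc
  · -- case 1 : w' ≤ q
    rw [max_eq_left (by linarith)] at hIr hw
    simp only [mul_zero, sub_zero, add_zero] at hIr hw
    have e : p^(r+1+1)*w = p*(1-p^(r+1))*(p^(r+1)*w') + p*p^(r+1)*q^(r+1) := by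
      rw [hw, pow_succ]; ring
    have h3 : p*(1-p^(r+1)) * q^(r+1) ≤ p*(1-p^(r+1)) * (p^(r+1)*w') :=
      mul_le_mul_of_nonneg_left hIr (by nlinarith)
    have h4 : q^(r+1) * q ≤ q^(r+1) * p := mul_le_mul_of_nonneg_left hqp hqr1
    have h5 : q^(r+1) * p = p*(1-p^(r+1))*q^(r+1) + p*p^(r+1)*q^(r+1) := by ring
    linarith
  · -- case 2 : q < w'
    rw [max_eq_right (by linarith)] at hIr hw
    have hw2 : w = q*(1 - p^(r+1)) + q^(r+1)
        + (w' - q) * (1 - p^(r+1) - ((r:ℝ)+1)*p^r*q) := by rw [hw]; ring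
    have hprod : (0:ℝ) ≤ (w' - q) * (1 - p^(r+1) - ((r:ℝ)+1)*p^r*q) :=
      mul_nonneg (by linarith) hD
    rcases le_or_gt (q^(r+1)) (q * p^(r+1)) with h2i | h2ii
    · -- subcase 2i : q^(r+1) ≤ q*P
      have hwlb : q*(1 - p^(r+1)) + q^(r+1) ≤ w := by linarith
      have key : q^(r+1) * q ≤ p^(r+1+1) * (q*(1 - p^(r+1)) + q^(r+1)) := by
        rw [pow_succ p (r+1)]
        rcases le_or_gt q (p * p^(r+1)) with hx | hx
        · nlinarith [mul_le_mul_of_nonneg_right hx hqr1,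
            mul_nonneg (mul_nonneg hq0 hq0) hPnn,
            mul_nonneg (mul_nonneg hp0.le hPnn) hqr1,
            mul_nonneg (mul_nonneg (mul_nonneg hp0.le hPnn) hq0) (by linarith : (0:ℝ) ≤ 1 - p^(r+1))]
        · nlinarith [mul_le_mul_of_nonneg_right h2i (by linarith : (0:ℝ) ≤ q - p * p^(r+1)),
            mul_nonneg (mul_nonneg hq0 hPnn) (by linarith : (0:ℝ) ≤ p - q),
            mul_nonneg (mul_nonneg (mul_nonneg hq0 hPnn) (by linarith : (0:ℝ) ≤ p - q)) (by linarith : (0:ℝ) ≤ 1 - p^(r+1))]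
      have hmono : p^(r+1+1) * (q*(1 - p^(r+1)) + q^(r+1)) ≤ p^(r+1+1) * w :=
        mul_le_mul_of_nonneg_left hwlb (by positivity)
      linarith
    · -- subcase 2ii : q*P < q^(r+1)
      have hd : w - q = q^(r+1) - q*p^(r+1)
          + (w' - q) * (1 - p^(r+1) - ((r:ℝ)+1)*p^r*q) := by rw [hw2]; ring
      have hdpos : 0 < w - q := by linarith
      rw [max_eq_right hdpos.le]
      have hk0 : q^(r+1) - p^(r+1)*q ≤ (w'-q)*(p^(r+1) + ((r:ℝ)+1)*p^r*q) := by
        linarith [hIr]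
      have hk1' : q^(r+1) - p^(r+1)*q ≤
          (q^(r+1) - q*p^(r+1) + (w' - q) * (1 - p^(r+1) - ((r:ℝ)+1)*p^r*q))
            *(p^(r+1) + ((r:ℝ)+1)*p^r*q) := by
        linarith [mul_le_mul_of_nonneg_left hk0 hD]
      have hk1 : q^(r+1) - p^(r+1)*q ≤ (w - q)*(p^(r+1) + ((r:ℝ)+1)*p^r*q) := by
        rw [hd]; exact hk1'
      have hk2 : q*(p^(r+1) + ((r:ℝ)+1)*p^r*q) ≤ p^(r+1)*(p + ((r:ℝ)+1+1)*q) := by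
        have e2 : p^(r+1)*(p + ((r:ℝ)+1+1)*q) - q*(p^(r+1) + ((r:ℝ)+1)*p^r*q)
            = p*p^(r+1) + (r:ℝ)*(p^r*q*(p-q)) + p^r*q*(p-q) := by ring
        linarith [e2, mul_nonneg (mul_nonneg hpr hq0) (by linarith : (0:ℝ) ≤ p - q),
          mul_nonneg hrnn (mul_nonneg (mul_nonneg hpr hq0) (by linarith : (0:ℝ) ≤ p - q)),
          mul_nonneg hp0.le hPnn]
      have a1 : (w-q)*(q*(p^(r+1) + ((r:ℝ)+1)*p^r*q)) ≤
          (w-q)*(p^(r+1)*(p + ((r:ℝ)+1+1)*q)) :=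
        mul_le_mul_of_nonneg_left hk2 hdpos.le
      have a2 : q*(q^(r+1) - p^(r+1)*q) ≤ q*((w - q)*(p^(r+1) + ((r:ℝ)+1)*p^r*q)) :=
        mul_le_mul_of_nonneg_left hk1 hq0
      have a4 : q*(q*p^(r+1)) ≤ q*(p*p^(r+1)) := by
        have := mul_nonneg (mul_nonneg hq0 hPnn) (by linarith : (0:ℝ) ≤ p - q)
        linarith [this]
      rw [pow_succ q (r+1), pow_succ p (r+1)]
      linarith [a1, a2, a4]

lemma main (p : ℝ) (hp1 : 1/2 ≤ p) (hp2 : p ≤ 1) : ∀ m : ℕ,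
    (1 ≤ m → v p (m+1) = v p m + 1 + p^(m+1) * ((m:ℝ) - v p m)
        + ((m:ℝ)+1) * p^m * (1-p) * max 0 ((m:ℝ) - 1 + p - v p m) - (1-p)^(m+1))
    ∧ (2 ≤ m → v p m + 1 ≤ v p (m+1))
    ∧ (2 ≤ m → (1-p)^(m+1) ≤ p^(m+1) * ((m:ℝ) - v p m)
        + ((m:ℝ)+1) * p^m * (1-p) * max 0 ((m:ℝ) - 1 + p - v p m)) := by
  intro m
  induction m using Nat.strong_induction_on with
  | _ m IH =>
  have hq0 : (0:ℝ) ≤ 1 - p := by linarith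
  have hp0 : (0:ℝ) < p := by linarith
  rcases Nat.eq_zero_or_pos m with rfl | hm1
  · exact ⟨fun h => absurd h (by omega), fun h => absurd h (by omega),
      fun h => absurd h (by omega)⟩
  -- chain lemma
  have chain : ∀ k : ℕ, k + 2 ≤ m → v p (m - k) + (k:ℝ) ≤ v p m := by
    intro k
    induction k with
    | zero => intro _; simp
    | succ k ih =>
        intro hk
        have hS := (IH (m - (k+1)) (by omega)).2.1 (by omega)
        have he : m - (k+1) + 1 = m - k := by omega
        rw [he] at hS
        have h2 := ih (by omega)
        push_cast
        push_cast at h2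
        linarith
  -- sup evaluation
  have hsup : ∀ (j : ℕ), j ∈ Finset.Icc 1 m → ∀ (H : (Finset.Icc 1 j).attach.Nonempty),
      (Finset.Icc 1 j).attach.sup' H (fun i => v p (m + 1 - i.1) + (i.1 : ℝ))
        = v p m + 1 + (if j = m then max 0 ((m:ℝ) - 1 + p - v p m) else 0) := by
    intro j hj H
    obtain ⟨hj1, hj2⟩ := Finset.mem_Icc.mp hj
    have hnn : (0:ℝ) ≤ if j = m then max 0 ((m:ℝ) - 1 + p - v p m) else 0 := by
      split
      · exact le_max_left _ _
      · exact le_refl 0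
    apply le_antisymm
    · apply Finset.sup'_le
      intro i _
      obtain ⟨hi1, hi2⟩ := Finset.mem_Icc.mp i.2
      by_cases him : (i : ℕ) = m
      · have hjm : j = m := by omega
        rw [him, show m + 1 - m = 1 by omega, v_one]
        rw [if_pos hjm]
        have h1 := le_max_right (0:ℝ) ((m:ℝ) - 1 + p - v p m)
        have h2 : ((m:ℕ):ℝ) = (m:ℝ) := rfl
        linarith [h1]
      · have hc := chain ((i:ℕ) - 1) (by omega)
        rw [show m - ((i:ℕ) - 1) = m + 1 - (i:ℕ) by omega] at hc
        have hcast : (((i:ℕ) - 1 : ℕ) : ℝ) = ((i:ℕ):ℝ) - 1 := by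
          push_cast [hi1]; ring
        rw [hcast] at hc
        linarith
    · by_cases hjm : j = m
      · rw [if_pos hjm]
        rcases le_or_gt ((m:ℝ) - 1 + p - v p m) 0 with h0 | h0
        · rw [max_eq_left h0]
          have h := Finset.le_sup' (fun i : {x // x ∈ Finset.Icc 1 j} => v p (m + 1 - i.1) + (i.1 : ℝ))
            (Finset.mem_attach _ ⟨1, Finset.mem_Icc.mpr ⟨le_refl 1, hj1⟩⟩)
          simp only [show m + 1 - 1 = m by omega, Nat.cast_one] at h
          linarith
        · rw [max_eq_right h0.le]
          have h := Finset.le_sup' (fun i : {x // x ∈ Finset.Icc 1 j} => v p (m + 1 - i.1) + (i.1 : ℝ))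
            (Finset.mem_attach _ ⟨m, Finset.mem_Icc.mpr ⟨hm1, by omega⟩⟩)
          simp only [show m + 1 - m = 1 by omega, v_one] at h
          linarith
      · rw [if_neg hjm, add_zero]
        have h := Finset.le_sup' (fun i : {x // x ∈ Finset.Icc 1 j} => v p (m + 1 - i.1) + (i.1 : ℝ))
          (Finset.mem_attach _ ⟨1, Finset.mem_Icc.mpr ⟨le_refl 1, hj1⟩⟩)
        simp only [show m + 1 - 1 = m by omega, Nat.cast_one] at h
        linarith
  -- recursion
  have hR : v p (m+1) = v p m + 1 + p^(m+1) * ((m:ℝ) - v p m)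
      + ((m:ℝ)+1) * p^m * (1-p) * max 0 ((m:ℝ) - 1 + p - v p m) - (1-p)^(m+1) := by
    rw [v_succ]
    rw [Finset.sum_congr rfl (fun j _ => by rw [hsup j.1 j.2])]
    rw [Finset.sum_attach (Finset.Icc 1 m) (fun j =>
      (((m + 1).choose j : ℕ) : ℝ) * p ^ j * (1 - p) ^ (m + 1 - j) *
        (v p m + 1 + (if j = m then max 0 ((m:ℝ) - 1 + p - v p m) else 0)))]
    have hsplit : ∀ j ∈ Finset.Icc 1 m,
        (((m + 1).choose j : ℕ) : ℝ) * p ^ j * (1 - p) ^ (m + 1 - j) *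
          (v p m + 1 + (if j = m then max 0 ((m:ℝ) - 1 + p - v p m) else 0))
        = (((m + 1).choose j : ℕ) : ℝ) * p ^ j * (1 - p) ^ (m + 1 - j) * (v p m + 1)
          + (if j = m then (((m + 1).choose j : ℕ) : ℝ) * p ^ j * (1 - p) ^ (m + 1 - j) *
              max 0 ((m:ℝ) - 1 + p - v p m) else 0) := by
      intro j _; split <;> ring
    rw [Finset.sum_congr rfl hsplit, Finset.sum_add_distrib]
    rw [Finset.sum_ite_eq' (Finset.Icc 1 m) m]
    rw [if_pos (Finset.mem_Icc.mpr ⟨hm1, le_refl m⟩)]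
    rw [← Finset.sum_mul, sum_binom p m hm1]
    rw [Nat.choose_succ_self_right, show m + 1 - m = 1 by omega, pow_one]
    push_cast
    ring
  have hI : 2 ≤ m → (1-p)^(m+1) ≤ p^(m+1) * ((m:ℝ) - v p m)
      + ((m:ℝ)+1) * p^m * (1-p) * max 0 ((m:ℝ) - 1 + p - v p m) := by
    intro hm2
    rcases Nat.lt_or_ge m 3 with h3 | h3
    · -- base case m = 2
      have hm2' : m = 2 := by omega
      subst hm2'
      have h := (IH 1 (by omega)).1 (le_refl 1)
      rw [v_one] at h
      rw [show ((1:ℕ):ℝ) - 1 + p - p = 0 by push_cast; ring] at h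
      rw [max_self] at h
      have hv2 : v p 2 = p + 1 + p^2*(1-p) - (1-p)^2 := by
        rw [show (2:ℕ) = 1 + 1 from rfl, h]; push_cast; ring
      rw [hv2]
      norm_num
      rcases le_or_gt ((1:ℝ) + p - (p + 1 + p^2*(1-p) - (1-p)^2)) 0 with h0 | h0
      · rw [max_eq_left h0]
        nlinarith [sq_nonneg (1-p), sq_nonneg p,
          mul_nonneg (sub_nonneg.2 hp2) (sub_nonneg.2 hp1),
          mul_nonneg (mul_nonneg (sub_nonneg.2 hp2) (sub_nonneg.2 hp2)) (sub_nonneg.2 hp1)]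
      · rw [max_eq_right h0.le]
        nlinarith [sq_nonneg (1-p), sq_nonneg p,
          mul_nonneg (sub_nonneg.2 hp2) (sub_nonneg.2 hp1),
          mul_nonneg (mul_nonneg (sub_nonneg.2 hp2) (sub_nonneg.2 hp2)) (sub_nonneg.2 hp1),
          mul_nonneg (mul_nonneg (sub_nonneg.2 hp2) (sub_nonneg.2 hp1)) (sub_nonneg.2 hp1)]
    · -- inductive case m = r+1, r ≥ 2
      obtain ⟨r, rfl⟩ : ∃ r, m = r + 1 := ⟨m-1, by omega⟩
      have hRr := (IH r (by omega)).1 (by omega)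
      have hIr := (IH r (by omega)).2.2 (by omega)
      have harg : ((r:ℝ) - 1 + p - v p r) = ((r:ℝ) - v p r) - (1-p) := by ring
      rw [harg] at hRr hIr
      push_cast
      have e1 : ((r:ℝ) + 1 - 1 + p - v p (r+1)) = ((r:ℝ) + 1 - v p (r+1)) - (1-p) := by
        ring
      rw [e1]
      exact Istep p (1-p) ((r:ℝ) - v p r) ((r:ℝ) + 1 - v p (r+1)) r hp1 hp2 rfl hIr
        (by rw [hRr]; ring)
  have hS : 2 ≤ m → v p m + 1 ≤ v p (m+1) := by
    intro hm2
    have h1 := hI hm2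
    rw [hR]
    linarith
  exact ⟨fun _ => hR, hS, hI⟩

theorem coin_game_recursion_simplified (p : ℝ) (hp1 : 1 / 2 ≤ p) (hp2 : p ≤ 1)
    (n : ℕ) (hn : 2 ≤ n) :
    v p n = v p (n - 1) + 1 + p ^ n * ((n : ℝ) - 1 - v p (n - 1)) +
      (n : ℝ) * p ^ (n - 1) * (1 - p) * max 0 ((n : ℝ) - 2 + p - v p (n - 1)) -
      (1 - p) ^ n := by
  obtain ⟨m, rfl⟩ : ∃ m, n = m + 1 := ⟨n-1, by omega⟩
  have h := (main p hp1 hp2 m).1 (by omega)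
  rw [show m + 1 - 1 = m from rfl]
  push_cast
  rw [h]
  have e : ((m:ℝ) + 1 - 2 + p - v p m) = ((m:ℝ) - 1 + p - v p m) := by ring
  rw [e]
  ring
end
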